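/- arXiv:2508.20798 — 7 statements merged into one kernel-verified Lean document; each statement's English description precedes it below -/
import Mathlib

section
/- Let t_1, ..., t_m be real numbers with 0 < t_i ≤ 1 for every i ∈ {1,...,m}. Then ∑_{i=1}^{m} (1 − t_i)/t_i ≥ ∑_{i=1}^{m} t_i(1 − t_i) / ((1/m) ∑_{j=1}^{m} t_j)^2. -/
open Finset

/-- Lemma 1 of the paper: for real numbers `t i` with `0 < t i ≤ 1`,
`∑ i, (1 - t i) / t i ≥ ∑ i, t i * (1 - t i) / ((1/m) * ∑ j, t j)^2`. -/
theorem sum_inv_ge_sum_div_mean_sq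
    (m : ℕ) (hm : 0 < m) (t : Fin m → ℝ)
    (ht : ∀ i, 0 < t i ∧ t i ≤ 1) :
    ∑ i, t i * (1 - t i) / ((1 / (m : ℝ)) * ∑ j, t j) ^ 2
      ≤ ∑ i, (1 - t i) / t i := by
  have hm' : (0:ℝ) < m := by exact_mod_cast hm
  set S := ∑ j, t j with hS
  have hSpos : 0 < S := Finset.sum_pos (fun i _ => (ht i).1) ⟨⟨0, hm⟩, mem_univ _⟩
  set μ : ℝ := (1/(m:ℝ)) * S with hμ
  have hμpos : 0 < μ := by positivity
  set A := ∑ i, (1 - t i) / t i with hA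
  set B := ∑ i, t i * (1 - t i) with hB
  set C := ∑ i, (1 - t i) with hC
  have hAnn : 0 ≤ A := Finset.sum_nonneg fun i _ =>
    div_nonneg (by linarith [(ht i).2]) (ht i).1.le
  have hBnn : 0 ≤ B := Finset.sum_nonneg fun i _ =>
    mul_nonneg (ht i).1.le (by linarith [(ht i).2])
  have hCnn : 0 ≤ C := Finset.sum_nonneg fun i _ => by linarith [(ht i).2]
  -- Cauchy–Schwarz : C^2 ≤ A * B
  have hCauchy : C^2 ≤ A * B := by
    have h := Finset.sum_mul_sq_le_sq_mul_sq univ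
      (fun i => Real.sqrt ((1 - t i) / t i)) (fun i => Real.sqrt (t i * (1 - t i)))
    have h1 : ∀ i : Fin m,
        Real.sqrt ((1 - t i) / t i) * Real.sqrt (t i * (1 - t i)) = 1 - t i := by
      intro i
      rw [← Real.sqrt_mul (div_nonneg (by linarith [(ht i).2]) (ht i).1.le)]
      have : (1 - t i) / t i * (t i * (1 - t i)) = (1 - t i)^2 := by
        have hne : t i ≠ 0 := (ht i).1.ne'
        field_simp
      rw [this, Real.sqrt_sq (by linarith [(ht i).2])]
    have h2 : ∀ i : Fin m, Real.sqrt ((1 - t i) / t i) ^ 2 = (1 - t i) / t i := by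
      intro i; exact Real.sq_sqrt (div_nonneg (by linarith [(ht i).2]) (ht i).1.le)
    have h3 : ∀ i : Fin m, Real.sqrt (t i * (1 - t i)) ^ 2 = t i * (1 - t i) := by
      intro i; exact Real.sq_sqrt (mul_nonneg (ht i).1.le (by linarith [(ht i).2]))
    simp only [h1, h2, h3] at h
    simpa [hA, hB, hC] using h
  -- B ≤ μ * C
  have hBC : B ≤ μ * C := by
    have hcs : S^2 ≤ (m : ℝ) * ∑ i, (t i)^2 := by
      have h := Finset.sum_mul_sq_le_sq_mul_sq univ t (fun _ => (1:ℝ))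
      simpa [hS, mul_comm] using h
    have hBeq : B = S - ∑ i, (t i)^2 := by
      simp [hB, mul_sub, Finset.sum_sub_distrib, hS, sq, mul_one]
    have hCeq : C = (m : ℝ) - S := by
      simp [hC, Finset.sum_sub_distrib, hS]
    rw [hBeq, hCeq, hμ]
    have heq : (1/(m:ℝ)) * S * ((m:ℝ) - S) = S - S^2/(m:ℝ) := by field_simp
    rw [heq]
    have hd : S^2/(m:ℝ) ≤ ∑ i, (t i)^2 := by
      rw [div_le_iff₀ hm']; nlinarith [hcs]
    linarith
  -- conclude
  have hgoal : B / μ^2 ≤ A := by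
    rw [div_le_iff₀ (by positivity)]
    rcases eq_or_lt_of_le hBnn with h0 | h0
    · rw [← h0]; positivity
    · have h1 : B * B ≤ (μ * C) * (μ * C) := mul_self_le_mul_self hBnn hBC
      have h2 : μ^2 * C^2 ≤ μ^2 * (A * B) := mul_le_mul_of_nonneg_left hCauchy (sq_nonneg μ)
      nlinarith [h1, h2, h0]
  calc ∑ i, t i * (1 - t i) / ((1 / (m : ℝ)) * ∑ j, t j) ^ 2
      = B / μ^2 := by rw [hB, ← Finset.sum_div]
    _ ≤ A := hgoal
end

section
/- Let t_1, ..., t_m be real numbers with 0 < t_i ≤ 1 for every i ∈ {1,...,m}, and let q be a real number with q ≥ (1/m) ∑_{j=1}^{m} t_j (so in particular q > 0). Then ∑_{i=1}^{m} t_i(1 − t_i) / q^2 ≤ ∑_{i=1}^{m} (1 − t_i)/t_i. -/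
/-!
Write `S = ∑ tᵢ`. Cauchy–Schwarz in the form `S² ≤ m ∑ tᵢ²` gives
`∑ tᵢ (1 - tᵢ) ≤ S (m - S) / m`, and in the form `m² ≤ S ∑ 1/tᵢ` it gives
`∑ (1 - tᵢ)/tᵢ ≥ m (m - S) / S`. Since `q ≥ S/m`, the left-hand side is at most
`m² / S² · S (m - S) / m = m (m - S) / S`.
-/

open Finset

section

variable {ι α : Type*} [Field α] [LinearOrder α] [IsStrictOrderedRing α]

theorem Finset.sum_mul_one_sub_le (s : Finset ι) (t : ι → α) :
    ∑ i ∈ s, t i * (1 - t i) ≤ (∑ i ∈ s, t i) * (#s - ∑ i ∈ s, t i) / #s := by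
  obtain rfl | hs := s.eq_empty_or_nonempty
  · simp
  have hsum : ∑ i ∈ s, t i * (1 - t i) = ∑ i ∈ s, t i - ∑ i ∈ s, t i ^ 2 := by
    rw [← sum_sub_distrib]
    exact sum_congr rfl fun i _ => by ring
  rw [hsum, le_div_iff₀ (by positivity)]
  nlinarith [sq_sum_le_card_mul_sum_sq (s := s) (f := t)]

theorem Finset.card_sq_div_sum_le_sum_inv (s : Finset ι) {t : ι → α}
    (ht : ∀ i ∈ s, 0 < t i) : (#s : α) ^ 2 / ∑ i ∈ s, t i ≤ ∑ i ∈ s, 1 / t i := by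
  simpa using sq_sum_div_le_sum_sq_div s (fun _ => (1 : α)) ht

end

/-- For real numbers `t i` with `0 < t i ≤ 1` and any real `q` at least the
arithmetic mean of the `t i`, one has
`∑ i, t i * (1 - t i) / q^2 ≤ ∑ i, (1 - t i) / t i`. -/
theorem sum_div_sq_le_sum_inv
    (m : ℕ) (hm : 0 < m) (t : Fin m → ℝ)
    (ht : ∀ i, 0 < t i ∧ t i ≤ 1)
    (q : ℝ) (hq : (1 / (m : ℝ)) * ∑ j, t j ≤ q) :
    ∑ i, t i * (1 - t i) / q ^ 2 ≤ ∑ i, (1 - t i) / t i := by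
  set S := ∑ j, t j
  have hS : 0 < S := sum_pos (fun i _ => (ht i).1) ⟨⟨0, hm⟩, mem_univ _⟩
  have hmean : S / m ≤ q := by rwa [one_div_mul_eq_div] at hq
  have hA : 0 ≤ ∑ i, t i * (1 - t i) :=
    sum_nonneg fun i _ => mul_nonneg (ht i).1.le (sub_nonneg.mpr (ht i).2)
  calc ∑ i, t i * (1 - t i) / q ^ 2
      = (∑ i, t i * (1 - t i)) / q ^ 2 := (sum_div ..).symm
    _ ≤ (∑ i, t i * (1 - t i)) / (S / m) ^ 2 := by gcongr
    _ ≤ S * (m - S) / m / (S / m) ^ 2 := by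
        gcongr
        simpa using sum_mul_one_sub_le univ t
    _ = m ^ 2 / S - m := by field_simp
    _ ≤ ∑ i, 1 / t i - m := by
        gcongr
        simpa using card_sq_div_sum_le_sum_inv univ fun i _ => (ht i).1
    _ = ∑ i, (1 - t i) / t i := by
        simp only [sub_div, div_self (ht _).1.ne', sum_sub_distrib, sum_const, card_univ,
          Fintype.card_fin, nsmul_eq_mul, mul_one]
end

section
/- (Unbiasedness of the user-aware estimator.) Suppose that for every document d with r(d) = 1 one has ∑_{u ∈ U} p(d,u)·w(u) > 0. Consider the random variable L̂ = ∑_{d ∈ D} λ(d)·e(d)·r(d) / (∑_{u' ∈ U} p(d,u')·w(u')), where the user u is drawn from w and then the examination indicators e(d) are drawn with P(e(d) = 1 | u) = p(d,u). Then the expectation of L̂ over the joint randomness of u and (e(d))_{d ∈ D} equals the ideal loss ∑_{d ∈ D} λ(d)·r(d). -/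
open Finset

lemma key_sum {D : Type} [Fintype D] [DecidableEq D] (q : D → ℝ) (d : D) :
    ∑ e : D → Bool, (∏ d', (if e d' then q d' else 1 - q d')) *
      (if e d then (1 : ℝ) else 0) = q d := by
  have h : ∀ e : D → Bool,
      (∏ d', (if e d' then q d' else 1 - q d')) * (if e d then (1 : ℝ) else 0)
        = ∏ d', ((if e d' then q d' else 1 - q d') *
            (if d' = d then (if e d' then (1 : ℝ) else 0) else 1)) := by
    intro e
    rw [Finset.prod_mul_distrib]
    congr 1
    rw [Finset.prod_ite_eq' Finset.univ d (fun d' => if e d' then (1 : ℝ) else 0)]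
    simp
  simp_rw [h]
  have key := Finset.sum_prod_piFinset (Finset.univ : Finset Bool)
    (fun (d' : D) (b : Bool) => (if b then q d' else 1 - q d') *
      (if d' = d then (if b then (1 : ℝ) else 0) else 1))
  rw [Fintype.piFinset_univ] at key
  rw [key, Finset.prod_eq_single d]
  · simp
  · intro d' _ hd'
    simp [hd']
  · simp

/-- Theorem 1 of the paper (unbiasedness of the user-aware estimator).
The user `u` is drawn from the query-conditional distribution `w`; given `u`,
the examination indicators `e d` are independent Bernoulli with parameter
`p d u`. The user-aware estimator divides each click `e d * r d` by the
user-weighted propensity `∑ u', p d u' * w u'`. Its expectation over the joint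
randomness of `u` and `e` equals the ideal loss `∑ d, lam d * r d`. -/
theorem user_aware_estimator_unbiased
    (D U : Type) [Fintype D] [DecidableEq D] [Fintype U]
    (lam : D → ℝ) (r : D → ℝ) (hr : ∀ d, r d = 0 ∨ r d = 1)
    (p : D → U → ℝ) (hp : ∀ d u, 0 ≤ p d u ∧ p d u ≤ 1)
    (w : U → ℝ) (hw0 : ∀ u, 0 ≤ w u) (hw1 : ∑ u, w u = 1)
    (hpos : ∀ d, r d = 1 → 0 < ∑ u, p d u * w u) :
    (∑ u : U, ∑ e : D → Bool,
        (w u * ∏ d, (if e d then p d u else 1 - p d u)) *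
          (∑ d, lam d * (if e d then (1 : ℝ) else 0) * r d /
            (∑ u', p d u' * w u')))
      = ∑ d, lam d * r d := by
  have step1 : ∀ u : U,
      (∑ e : D → Bool,
        (w u * ∏ d, (if e d then p d u else 1 - p d u)) *
          (∑ d, lam d * (if e d then (1 : ℝ) else 0) * r d /
            (∑ u', p d u' * w u')))
      = ∑ d, w u * p d u * (lam d * r d / (∑ u', p d u' * w u')) := by
    intro u
    simp_rw [Finset.mul_sum]
    rw [Finset.sum_comm]
    refine Finset.sum_congr rfl fun d _ => ?_
    have reorg : ∀ e : D → Bool,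
        (w u * ∏ d', (if e d' then p d' u else 1 - p d' u)) *
          (lam d * (if e d then (1 : ℝ) else 0) * r d / (∑ u', p d u' * w u'))
        = (w u * (lam d * r d / (∑ u', p d u' * w u'))) *
          ((∏ d', (if e d' then p d' u else 1 - p d' u)) *
            (if e d then (1 : ℝ) else 0)) := by
      intro e; ring
    simp_rw [reorg]
    rw [← Finset.mul_sum, key_sum (fun d' => p d' u) d]
    ring
  simp_rw [step1]
  rw [Finset.sum_comm]
  refine Finset.sum_congr rfl fun d _ => ?_
  rcases hr d with h0 | h1
  · simp [h0]
  · have hS := hpos d h1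
    have : ∑ u, w u * p d u * (lam d * r d / (∑ u', p d u' * w u'))
        = (∑ u, p d u * w u) * (lam d * r d / (∑ u', p d u' * w u')) := by
      rw [Finset.sum_mul]
      refine Finset.sum_congr rfl fun u _ => ?_
      ring
    rw [this, mul_div_assoc', mul_comm, mul_div_assoc, div_self hS.ne', mul_one]
end

section
/- (Variance of the user-aware estimator.) Let w : U → [0,1] be a probability distribution on U, and suppose ∑_{u' ∈ U} p(d,u')·w(u') > 0 for every d ∈ D. Let S = {(s, u_s)}_{s=1}^{N} be N sessions, session s having user u_s ∈ U; in each session s, draw examination indicators e_s(d) ∈ {0,1} with P(e_s(d)=1) = p(d, u_s), independently across documents and across sessions. Then the variance of the user-aware estimator (1/N) ∑_{s=1}^{N} ∑_{d ∈ D} λ(d)·e_s(d)·r(d) / (∑_{u' ∈ U} p(d,u')·w(u')) equals (1/N^2) ∑_{d ∈ D, r(d)=1} ∑_{s=1}^{N} λ(d)^2 · p(d, u_s) · (1 − p(d, u_s)) / (∑_{u' ∈ U} p(d,u')·w(u'))^2. -/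
open Finset

/-- Expectation of `f` on a finite sample space with probability mass `P`. -/
noncomputable def fexp {Ω : Type*} [Fintype Ω] (P : Ω → ℝ) (f : Ω → ℝ) : ℝ :=
  ∑ ω, P ω * f ω

/-- Variance of `f` on a finite sample space with probability mass `P`. -/
noncomputable def fvar {Ω : Type*} [Fintype Ω] (P : Ω → ℝ) (f : Ω → ℝ) : ℝ :=
  fexp P (fun ω => (f ω - fexp P f) ^ 2)

section aux

variable {ι : Type*} [Fintype ι] [DecidableEq ι] (q : ι → ℝ)

lemma key_fact (T : ι → Bool → ℝ) :
    ∑ E : ι → Bool, ∏ i, ((if E i then q i else 1 - q i) * T i (E i))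
      = ∏ i, (q i * T i true + (1 - q i) * T i false) := by
  have := Fintype.prod_sum (κ := fun _ : ι => Bool)
    (fun i b => (if b then q i else 1 - q i) * T i b)
  rw [← this]
  congr 1; funext i
  simp [Fintype.sum_bool]

lemma mass_one : ∑ E : ι → Bool, ∏ i, (if E i then q i else 1 - q i) = 1 := by
  have := key_fact q (fun _ _ => 1)
  simpa using this

lemma moment1 (j : ι) :
    ∑ E : ι → Bool, (∏ i, (if E i then q i else 1 - q i)) *
      (if E j then (1:ℝ) else 0) = q j := by
  have h := key_fact q (fun i b => if i = j then (if b then (1:ℝ) else 0) else 1)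
  have h2 : ∀ E : ι → Bool,
      (∏ i, (if E i then q i else 1 - q i)) * (if E j then (1:ℝ) else 0)
      = ∏ i, ((if E i then q i else 1 - q i) *
          (if i = j then (if E i then (1:ℝ) else 0) else 1)) := by
    intro E
    rw [Finset.prod_mul_distrib, Finset.prod_ite_eq' Finset.univ j
      (fun i => if E i then (1:ℝ) else 0)]
    simp
  rw [Finset.sum_congr rfl (fun E _ => h2 E), h]
  calc ∏ i, (q i * (if i = j then (if true then (1:ℝ) else 0) else 1) +
        (1 - q i) * (if i = j then (if false then (1:ℝ) else 0) else 1))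
      = ∏ i, (if i = j then q i else 1) := by
        refine Finset.prod_congr rfl fun i _ => by
          by_cases hij : i = j <;> simp [hij]
    _ = q j := by rw [Finset.prod_ite_eq' Finset.univ j q]; simp

lemma moment2 (j k : ι) :
    ∑ E : ι → Bool, (∏ i, (if E i then q i else 1 - q i)) *
      ((if E j then (1:ℝ) else 0) * (if E k then (1:ℝ) else 0))
      = if j = k then q j else q j * q k := by
  by_cases hjk : j = k
  · subst hjk
    simp only [if_pos rfl]
    have : ∀ E : ι → Bool, (if E j then (1:ℝ) else 0) * (if E j then (1:ℝ) else 0)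
        = (if E j then (1:ℝ) else 0) := by intro E; by_cases h : E j <;> simp [h]
    rw [Finset.sum_congr rfl (fun E _ => by rw [this E])]
    exact moment1 q j
  · rw [if_neg hjk]
    have h := key_fact q (fun i b =>
      (if i = j then (if b then (1:ℝ) else 0) else 1) *
      (if i = k then (if b then (1:ℝ) else 0) else 1))
    have h2 : ∀ E : ι → Bool,
        (∏ i, (if E i then q i else 1 - q i)) *
          ((if E j then (1:ℝ) else 0) * (if E k then (1:ℝ) else 0))
        = ∏ i, ((if E i then q i else 1 - q i) *
            ((if i = j then (if E i then (1:ℝ) else 0) else 1) *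
             (if i = k then (if E i then (1:ℝ) else 0) else 1))) := by
      intro E
      rw [Finset.prod_mul_distrib, Finset.prod_mul_distrib,
        Finset.prod_ite_eq' Finset.univ j (fun i => if E i then (1:ℝ) else 0),
        Finset.prod_ite_eq' Finset.univ k (fun i => if E i then (1:ℝ) else 0)]
      simp [mul_assoc]
    rw [Finset.sum_congr rfl (fun E _ => h2 E), h]
    have hprod : ∀ i, (q i * ((if i = j then (if true then (1:ℝ) else 0) else 1) *
          (if i = k then (if true then (1:ℝ) else 0) else 1)) +
        (1 - q i) * ((if i = j then (if false then (1:ℝ) else 0) else 1) *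
          (if i = k then (if false then (1:ℝ) else 0) else 1)))
        = (if i = j then q i else 1) * (if i = k then q i else 1) := by
      intro i
      by_cases hij : i = j
      · subst hij
        simp [hjk]
      · by_cases hik : i = k
        · subst hik
          simp [hij]
        · simp [hij, hik]
    rw [Finset.prod_congr rfl (fun i _ => hprod i), Finset.prod_mul_distrib,
      Finset.prod_ite_eq' Finset.univ j q, Finset.prod_ite_eq' Finset.univ k q]
    simp

lemma var_indep (a : ι → ℝ) :
    fvar (fun E : ι → Bool => ∏ i, (if E i then q i else 1 - q i))
      (fun E => ∑ i, a i * (if E i then (1:ℝ) else 0))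
      = ∑ i, a i ^ 2 * (q i * (1 - q i)) := by
  set P : (ι → Bool) → ℝ := fun E => ∏ i, (if E i then q i else 1 - q i) with hP
  set f : (ι → Bool) → ℝ := fun E => ∑ i, a i * (if E i then (1:ℝ) else 0) with hf
  have hmass : ∑ E : ι → Bool, P E = 1 := mass_one q
  have hmean : fexp P f = ∑ i, a i * q i := by
    rw [fexp]
    calc ∑ E : ι → Bool, P E * f E
        = ∑ E : ι → Bool, ∑ i, a i * (P E * (if E i then (1:ℝ) else 0)) := by
          refine Finset.sum_congr rfl fun E _ => ?_
          rw [hf, Finset.mul_sum]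
          exact Finset.sum_congr rfl fun i _ => by ring
      _ = ∑ i, ∑ E : ι → Bool, a i * (P E * (if E i then (1:ℝ) else 0)) :=
          Finset.sum_comm
      _ = ∑ i, a i * q i := by
          refine Finset.sum_congr rfl fun i _ => ?_
          rw [← Finset.mul_sum, moment1 q i]
  have hm2 : fexp P (fun E => f E ^ 2)
      = ∑ j, ∑ k, a j * a k * (if j = k then q j else q j * q k) := by
    rw [fexp]
    calc ∑ E : ι → Bool, P E * f E ^ 2
        = ∑ E : ι → Bool, ∑ j, ∑ k, a j * a k *
            (P E * ((if E j then (1:ℝ) else 0) * (if E k then (1:ℝ) else 0))) := by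
          refine Finset.sum_congr rfl fun E _ => ?_
          rw [hf, sq, Finset.sum_mul_sum, Finset.mul_sum]
          refine Finset.sum_congr rfl fun j _ => ?_
          rw [Finset.mul_sum]
          exact Finset.sum_congr rfl fun k _ => by ring
      _ = ∑ j, ∑ k, ∑ E : ι → Bool, a j * a k *
            (P E * ((if E j then (1:ℝ) else 0) * (if E k then (1:ℝ) else 0))) := by
          rw [Finset.sum_comm]
          exact Finset.sum_congr rfl fun j _ => Finset.sum_comm
      _ = ∑ j, ∑ k, a j * a k * (if j = k then q j else q j * q k) := by
          refine Finset.sum_congr rfl fun j _ => Finset.sum_congr rfl fun k _ => ?_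
          rw [← Finset.mul_sum, moment2 q j k]
  have hvar : fvar P f = fexp P (fun E => f E ^ 2) - (fexp P f) ^ 2 := by
    rw [fvar, fexp, fexp]
    calc ∑ E : ι → Bool, P E * (f E - fexp P f) ^ 2
        = ∑ E : ι → Bool, (P E * f E ^ 2 - 2 * fexp P f * (P E * f E)
            + (fexp P f) ^ 2 * P E) := by
          exact Finset.sum_congr rfl fun E _ => by ring
      _ = (∑ E : ι → Bool, P E * f E ^ 2) - 2 * fexp P f * (∑ E : ι → Bool, P E * f E)
            + (fexp P f) ^ 2 * (∑ E : ι → Bool, P E) := by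
          rw [Finset.sum_add_distrib, Finset.sum_sub_distrib, ← Finset.mul_sum,
            ← Finset.mul_sum]
      _ = (∑ E : ι → Bool, P E * f E ^ 2) - (fexp P f) ^ 2 := by
          rw [hmass]
          have : (∑ E : ι → Bool, P E * f E) = fexp P f := rfl
          rw [this]; ring
  rw [hvar, hm2, hmean, sq (∑ i, a i * q i), Finset.sum_mul_sum, ← Finset.sum_sub_distrib]
  calc ∑ j, ((∑ k, a j * a k * (if j = k then q j else q j * q k))
        - ∑ k, a j * q j * (a k * q k))
      = ∑ j, ∑ k, (if j = k then a j ^ 2 * (q j * (1 - q j)) else 0) := by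
        refine Finset.sum_congr rfl fun j _ => ?_
        rw [← Finset.sum_sub_distrib]
        refine Finset.sum_congr rfl fun k _ => ?_
        by_cases hjk : j = k
        · subst hjk; rw [if_pos rfl, if_pos rfl]; ring
        · rw [if_neg hjk, if_neg hjk]; ring
    _ = ∑ i, a i ^ 2 * (q i * (1 - q i)) := by
        refine Finset.sum_congr rfl fun j _ => ?_
        rw [Finset.sum_ite_eq]
        simp

lemma fexp_equiv {Ω Ω' : Type*} [Fintype Ω] [Fintype Ω'] (e : Ω' ≃ Ω)
    (P f : Ω → ℝ) :
    fexp P f = fexp (fun ω' => P (e ω')) (fun ω' => f (e ω')) :=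
  (Fintype.sum_equiv e _ _ (fun _ => rfl)).symm

lemma fvar_equiv {Ω Ω' : Type*} [Fintype Ω] [Fintype Ω'] (e : Ω' ≃ Ω)
    (P f : Ω → ℝ) :
    fvar P f = fvar (fun ω' => P (e ω')) (fun ω' => f (e ω')) := by
  rw [fvar, fvar, ← fexp_equiv e P f]
  exact fexp_equiv e P _

end aux

/-- Variance of the user-aware estimator over `N` sessions with users `us s`:
the examination indicators `E s d` are mutually independent Bernoulli with
parameters `p d (us s)`, and the estimator is
`(1/N) * ∑ s, ∑ d, lam d * E s d * r d / (∑ u', p d u' * w u')`. Its variance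
equals `(1/N^2) * ∑_{d : r d = 1} ∑ s, lam d ^ 2 * p d (us s) *
(1 - p d (us s)) / (∑ u', p d u' * w u') ^ 2`. -/


theorem user_aware_estimator_variance
    (D U : Type) [Fintype D] [DecidableEq D] [Fintype U]
    (N : ℕ) (hN : 0 < N)
    (lam : D → ℝ) (r : D → ℝ) (hr : ∀ d, r d = 0 ∨ r d = 1)
    [DecidablePred fun d => r d = 1]
    (p : D → U → ℝ) (hp : ∀ d u, 0 ≤ p d u ∧ p d u ≤ 1)
    (w : U → ℝ) (hw0 : ∀ u, 0 ≤ w u) (hw1 : ∑ u, w u = 1)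
    (hpos : ∀ d, 0 < ∑ u', p d u' * w u')
    (us : Fin N → U) :
    fvar
      (fun E : Fin N → D → Bool =>
        ∏ s, ∏ d, (if E s d then p d (us s) else 1 - p d (us s)))
      (fun E =>
        (1 / (N : ℝ)) * ∑ s, ∑ d,
          lam d * (if E s d then (1 : ℝ) else 0) * r d /
            (∑ u', p d u' * w u'))
    = (1 / (N : ℝ) ^ 2) *
        ∑ d ∈ Finset.univ.filter (fun d => r d = 1), ∑ s : Fin N,
          lam d ^ 2 * p d (us s) * (1 - p d (us s)) /
            (∑ u', p d u' * w u') ^ 2 := by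
  classical
  set q : Fin N × D → ℝ := fun i => p i.2 (us i.1) with hq
  set a : Fin N × D → ℝ := fun i =>
    (1 / (N : ℝ)) * (lam i.2 * r i.2 / (∑ u', p i.2 u' * w u')) with ha
  rw [fvar_equiv (Equiv.curry (Fin N) D Bool)]
  have hcur : ∀ (E : Fin N × D → Bool) (s : Fin N) (d : D),
      (Equiv.curry (Fin N) D Bool) E s d = E (s, d) := fun _ _ _ => rfl
  simp only [hcur]
  have hP : (fun E : Fin N × D → Bool =>
      ∏ s, ∏ d, (if E (s, d) then p d (us s) else 1 - p d (us s)))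
      = fun E : Fin N × D → Bool => ∏ i, (if E i then q i else 1 - q i) := by
    funext E
    exact (Fintype.prod_prod_type
      (fun i : Fin N × D => if E i then q i else 1 - q i)).symm
  have hf : (fun E : Fin N × D → Bool =>
      (1 / (N : ℝ)) * ∑ s, ∑ d,
        lam d * (if E (s, d) then (1 : ℝ) else 0) * r d / (∑ u', p d u' * w u'))
      = fun E : Fin N × D → Bool => ∑ i, a i * (if E i then (1:ℝ) else 0) := by
    funext E
    rw [Fintype.sum_prod_type
      (f := fun i : Fin N × D => a i * (if E i then (1:ℝ) else 0)),
      Finset.mul_sum]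
    refine Finset.sum_congr rfl fun s _ => ?_
    rw [Finset.mul_sum]
    refine Finset.sum_congr rfl fun d _ => ?_
    simp only [ha]
    ring
  rw [hP, hf, var_indep q a]
  calc ∑ i : Fin N × D, a i ^ 2 * (q i * (1 - q i))
      = ∑ d : D, ∑ s : Fin N, r d ^ 2 * ((1 / (N : ℝ) ^ 2) *
          (lam d ^ 2 * p d (us s) * (1 - p d (us s)) /
            (∑ u', p d u' * w u') ^ 2)) := by
        rw [Fintype.sum_prod_type
          (f := fun i : Fin N × D => a i ^ 2 * (q i * (1 - q i))),
          Finset.sum_comm]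
        refine Finset.sum_congr rfl fun d _ => Finset.sum_congr rfl fun s _ => ?_
        simp only [ha, hq]
        ring
    _ = (1 / (N : ℝ) ^ 2) * ∑ d : D, r d ^ 2 *
          ∑ s : Fin N, lam d ^ 2 * p d (us s) * (1 - p d (us s)) /
            (∑ u', p d u' * w u') ^ 2 := by
        rw [Finset.mul_sum]
        refine Finset.sum_congr rfl fun d _ => ?_
        rw [Finset.mul_sum, Finset.mul_sum]
        exact Finset.sum_congr rfl fun s _ => by ring
    _ = (1 / (N : ℝ) ^ 2) *
          ∑ d ∈ Finset.univ.filter (fun d => r d = 1), ∑ s : Fin N,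
            lam d ^ 2 * p d (us s) * (1 - p d (us s)) /
              (∑ u', p d u' * w u') ^ 2 := by
        congr 1
        rw [Finset.sum_filter]
        refine Finset.sum_congr rfl fun d _ => ?_
        rcases hr d with h | h <;> simp [h]
end

section
/- (Lower variance of the user-aware estimator, Theorem 2.) Let S = {(s, u_s)}_{s=1}^{N} be N sessions with users u_s ∈ U, and let w : U → [0,1] be a probability distribution on U. Suppose 0 < p(d,u) ≤ 1 for all d ∈ D and u ∈ U, and suppose that for every document d ∈ D one has ∑_{u ∈ U} p(d,u)·w(u) ≥ (1/N) ∑_{s=1}^{N} p(d, u_s). Then (1/N^2) ∑_{d ∈ D, r(d)=1} ∑_{s=1}^{N} λ(d)^2 · p(d, u_s) · (1 − p(d, u_s)) / (∑_{u ∈ U} p(d,u)·w(u))^2 ≤ (1/N^2) ∑_{d ∈ D, r(d)=1} ∑_{s=1}^{N} λ(d)^2 · (1 − p(d, u_s)) / p(d, u_s); that is, the variance of the user-aware estimator is at most the variance of the straightforward estimator. -/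
open Finset

/-- Key per-document inequality. -/
lemma key_ineq {N : ℕ} (hN : 0 < N) (q : Fin N → ℝ)
    (hq0 : ∀ s, 0 < q s) (hq1 : ∀ s, q s ≤ 1)
    (P : ℝ) (hP : (1 / (N : ℝ)) * ∑ s, q s ≤ P) :
    ∑ s, q s * (1 - q s) / P ^ 2 ≤ ∑ s, (1 - q s) / q s := by
  set X : ℝ := ∑ s, q s * (1 - q s) with hX
  set B : ℝ := ∑ s, (1 - q s) with hB
  set Y : ℝ := ∑ s, (1 - q s) / q s with hY
  have hX0 : 0 ≤ X := Finset.sum_nonneg fun s _ =>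
    mul_nonneg (hq0 s).le (by linarith [hq1 s])
  have hY0 : 0 ≤ Y := Finset.sum_nonneg fun s _ =>
    div_nonneg (by linarith [hq1 s]) (hq0 s).le
  have hA0 : 0 < (1 / (N : ℝ)) * ∑ s, q s := by
    have hs : 0 < ∑ s : Fin N, q s :=
      Finset.sum_pos (fun s _ => hq0 s) (by simp [Finset.univ_nonempty_iff, Fin.pos_iff_nonempty.mp hN])
    positivity
  have hP0 : 0 < P := lt_of_lt_of_le hA0 hP
  -- Chebyshev: N * X ≤ (∑ q) * B
  have hcheb : (N : ℝ) * X ≤ (∑ s, q s) * B := by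
    have hanti : Antivary q (fun s => 1 - q s) := by
      intro i j hij
      simp only at hij
      linarith
    have := hanti.card_mul_sum_le_sum_mul_sum
    simpa [hX, hB] using this
  have hXAB : X ≤ ((1 / (N : ℝ)) * ∑ s, q s) * B := by
    have hNpos : (0 : ℝ) < N := Nat.cast_pos.mpr hN
    calc X ≤ (∑ s, q s) * B / N := by
          rw [le_div_iff₀ hNpos]; linarith [hcheb]
    _ = (1 / (N : ℝ) * ∑ s, q s) * B := by ring
  -- Cauchy–Schwarz: B^2 ≤ X * Y
  have hCS : B ^ 2 ≤ X * Y := by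
    apply Finset.sum_sq_le_sum_mul_sum_of_sq_eq_mul
    · intro s _; exact mul_nonneg (hq0 s).le (by linarith [hq1 s])
    · intro s _; exact div_nonneg (by linarith [hq1 s]) (hq0 s).le
    · intro s _
      have hne : q s ≠ 0 := (hq0 s).ne'
      field_simp
  -- Combine: X ≤ P^2 * Y
  have hXP : X ≤ P ^ 2 * Y := by
    set A : ℝ := (1 / (N : ℝ)) * ∑ s, q s with hAdef
    have hXA : X ≤ A ^ 2 * Y := by
      rcases eq_or_lt_of_le hX0 with h | h
      · rw [← h]; positivity
      · have hB0 : 0 ≤ B := Finset.sum_nonneg fun s _ => by linarith [hq1 s]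
        have h1 : X * X ≤ A ^ 2 * Y * X := by
          calc X * X ≤ (A * B) * (A * B) := by
                exact mul_le_mul hXAB hXAB hX0 (mul_nonneg hA0.le hB0)
          _ = A ^ 2 * B ^ 2 := by ring
          _ ≤ A ^ 2 * (X * Y) := by
                have : (0:ℝ) ≤ A ^ 2 := sq_nonneg A
                exact mul_le_mul_of_nonneg_left hCS this
          _ = A ^ 2 * Y * X := by ring
        exact le_of_mul_le_mul_right h1 h
    calc X ≤ A ^ 2 * Y := hXA
    _ ≤ P ^ 2 * Y := by
        apply mul_le_mul_of_nonneg_right _ hY0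
        have : A ≤ P := hP
        have hA0' : (0:ℝ) ≤ A := hA0.le
        nlinarith
  calc ∑ s, q s * (1 - q s) / P ^ 2 = X / P ^ 2 := by rw [hX, Finset.sum_div]
  _ ≤ Y := by rw [div_le_iff₀ (by positivity)]; linarith [hXP]

/-- Theorem 2 of the paper (lower variance of the user-aware estimator).
If `0 < p d u ≤ 1` everywhere and for every document `d` the query-level
user-weighted propensity `∑ u, p d u * w u` is at least the average
session-level propensity `(1/N) * ∑ s, p d (us s)`, then the variance of the
user-aware estimator is at most the variance of the straightforward
estimator. -/
theorem user_aware_estimator_lower_variance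
    (D U : Type) [Fintype D] [Fintype U]
    (N : ℕ) (hN : 0 < N)
    (lam : D → ℝ) (r : D → ℝ) (hr : ∀ d, r d = 0 ∨ r d = 1)
    [DecidablePred fun d => r d = 1]
    (p : D → U → ℝ) (hp : ∀ d u, 0 < p d u ∧ p d u ≤ 1)
    (w : U → ℝ) (hw0 : ∀ u, 0 ≤ w u) (hw1 : ∑ u, w u = 1)
    (us : Fin N → U)
    (hcond : ∀ d, (1 / (N : ℝ)) * ∑ s, p d (us s) ≤ ∑ u, p d u * w u) :
    (1 / (N : ℝ) ^ 2) *
        ∑ d ∈ Finset.univ.filter (fun d => r d = 1), ∑ s : Fin N,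
          lam d ^ 2 * p d (us s) * (1 - p d (us s)) /
            (∑ u, p d u * w u) ^ 2
      ≤ (1 / (N : ℝ) ^ 2) *
          ∑ d ∈ Finset.univ.filter (fun d => r d = 1), ∑ s : Fin N,
            lam d ^ 2 * (1 - p d (us s)) / p d (us s) := by
  apply mul_le_mul_of_nonneg_left _ (by positivity)
  apply Finset.sum_le_sum
  intro d _
  have key := key_ineq hN (fun s => p d (us s)) (fun s => (hp d (us s)).1)
    (fun s => (hp d (us s)).2) (∑ u, p d u * w u) (hcond d)
  calc ∑ s : Fin N, lam d ^ 2 * p d (us s) * (1 - p d (us s)) / (∑ u, p d u * w u) ^ 2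
      = lam d ^ 2 * ∑ s : Fin N, p d (us s) * (1 - p d (us s)) / (∑ u, p d u * w u) ^ 2 := by
        rw [Finset.mul_sum]; congr 1; ext s; ring
  _ ≤ lam d ^ 2 * ∑ s : Fin N, (1 - p d (us s)) / p d (us s) := by
        exact mul_le_mul_of_nonneg_left key (sq_nonneg _)
  _ = ∑ s : Fin N, lam d ^ 2 * (1 - p d (us s)) / p d (us s) := by
        rw [Finset.mul_sum]; congr 1; ext s; ring
end

section
/- (Per-document variance comparison.) Fix a document d. Let p_1, ..., p_N be real numbers with 0 < p_s ≤ 1 for every s (the examination probabilities of the users of the N sessions for d), let λ ∈ ℝ, and let q be a real number with q ≥ (1/N) ∑_{s=1}^{N} p_s. Then ∑_{s=1}^{N} λ^2 · p_s · (1 − p_s) / q^2 ≤ ∑_{s=1}^{N} λ^2 · (1 − p_s) / p_s. -/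
open Finset

/-- Per-document variance comparison: for a fixed document with session
examination probabilities `0 < p s ≤ 1` and any real `q` at least their
arithmetic mean, the per-document variance contribution of the user-aware
estimator is at most that of the straightforward estimator:
`∑ s, lam^2 * p s * (1 - p s) / q^2 ≤ ∑ s, lam^2 * (1 - p s) / p s`. -/
theorem per_document_variance_comparison
    (N : ℕ) (hN : 0 < N) (p : Fin N → ℝ)
    (hp : ∀ s, 0 < p s ∧ p s ≤ 1)
    (lam : ℝ) (q : ℝ) (hq : (1 / (N : ℝ)) * ∑ s, p s ≤ q) :
    ∑ s, lam ^ 2 * p s * (1 - p s) / q ^ 2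
      ≤ ∑ s, lam ^ 2 * (1 - p s) / p s := by
  set A : ℝ := ∑ s, p s * (1 - p s) with hA
  set B : ℝ := ∑ s, (1 - p s) / p s with hB
  set C : ℝ := ∑ s, (1 - p s) with hC
  set S : ℝ := ∑ s, p s with hS
  have hNpos : (0 : ℝ) < N := Nat.cast_pos.mpr hN
  have hSpos : 0 < S := Finset.sum_pos (fun s _ => (hp s).1) ⟨⟨0, hN⟩, mem_univ _⟩
  have hqpos : 0 < q := lt_of_lt_of_le (by positivity) hq
  have hA0 : 0 ≤ A := Finset.sum_nonneg fun s _ => by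
    have := (hp s).1; have := (hp s).2; nlinarith
  have hB0 : 0 ≤ B := Finset.sum_nonneg fun s _ =>
    div_nonneg (by linarith [(hp s).2]) (hp s).1.le
  have hC0 : 0 ≤ C := Finset.sum_nonneg fun s _ => by
    have := (hp s).2; linarith
  -- Cauchy–Schwarz : C^2 ≤ A * B
  have cauchy : C ^ 2 ≤ A * B := by
    have h := Finset.sum_mul_sq_le_sq_mul_sq Finset.univ
      (fun s => Real.sqrt (p s * (1 - p s))) (fun s => Real.sqrt ((1 - p s) / p s))
    have h1 : ∀ s : Fin N,
        Real.sqrt (p s * (1 - p s)) * Real.sqrt ((1 - p s) / p s) = 1 - p s := by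
      intro s
      rw [← Real.sqrt_mul (by nlinarith [(hp s).1, (hp s).2])]
      have hps := (hp s).1
      have : p s * (1 - p s) * ((1 - p s) / p s) = (1 - p s) ^ 2 := by
        field_simp
      rw [this, Real.sqrt_sq (by linarith [(hp s).2])]
    have h2 : ∀ s : Fin N, Real.sqrt (p s * (1 - p s)) ^ 2 = p s * (1 - p s) := fun s =>
      Real.sq_sqrt (by nlinarith [(hp s).1, (hp s).2])
    have h3 : ∀ s : Fin N, Real.sqrt ((1 - p s) / p s) ^ 2 = (1 - p s) / p s := fun s =>
      Real.sq_sqrt (div_nonneg (by linarith [(hp s).2]) (hp s).1.le)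
    simp only [h1, h2, h3] at h
    exact h
  -- Chebyshev : N * A ≤ S * C
  have cheb : (N : ℝ) * A ≤ S * C := by
    have hanti : Antivary p (fun s => 1 - p s) := by
      intro i j hij
      simp only [sub_lt_sub_iff_left] at hij
      exact hij.le
    have h := hanti.card_mul_sum_le_sum_mul_sum
    have hCe : C = N - S := by
      rw [hC, hS, Finset.sum_sub_distrib]; simp
    rw [hCe]
    simpa using h
  -- hence A ≤ q * C
  have hAqC : A ≤ q * C := by
    have hSq : S ≤ N * q := by
      rw [one_div, inv_mul_le_iff₀ hNpos] at hq
      exact hq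
    nlinarith
  -- main inequality without lam
  have key : A / q ^ 2 ≤ B := by
    rw [div_le_iff₀ (by positivity)]
    rcases eq_or_lt_of_le hA0 with h | hApos
    · nlinarith
    · have : A ^ 2 ≤ (q * C) ^ 2 := by nlinarith
      nlinarith
  calc ∑ s, lam ^ 2 * p s * (1 - p s) / q ^ 2
      = lam ^ 2 * (A / q ^ 2) := by
        rw [hA, Finset.sum_div, Finset.mul_sum]
        exact Finset.sum_congr rfl fun s _ => by ring
    _ ≤ lam ^ 2 * B := by nlinarith [sq_nonneg lam]
    _ = ∑ s, lam ^ 2 * (1 - p s) / p s := by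
        rw [hB, Finset.mul_sum]
        exact Finset.sum_congr rfl fun s _ => by ring
end

section
/- (Expected value of the user-oblivious IPS-PBM estimator under personalized behavior.) Let v : U → [0,1] be a second probability distribution on U (the marginal user distribution P(u) over all queries), and suppose ∑_{u ∈ U} p(d,u)·v(u) > 0 for every d ∈ D. Consider the random variable L̂_PBM = ∑_{d ∈ D} λ(d)·c(d) / (∑_{u' ∈ U} p(d,u')·v(u')), where the user u is drawn from the query-conditional distribution w, the examination indicators e(d) are drawn with P(e(d)=1 | u) = p(d,u) independently across documents given u, and c(d) = e(d)·r(d). Then the expectation of L̂_PBM equals ∑_{d ∈ D} λ(d)·r(d) · (∑_{u ∈ U} p(d,u)·w(u)) / (∑_{u ∈ U} p(d,u)·v(u)). Consequently, the IPS-PBM estimator is biased for the ideal loss ∑_{d} λ(d)·r(d) whenever this weighted sum differs from it, i.e. when the query-conditional weighted propensity ∑_{u} p(d,u)·w(u) differs from the marginal weighted propensity ∑_{u} p(d,u)·v(u) on documents carrying nonzero weight λ(d)·r(d). -/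
/-!
Given the user `u`, the click on `d` is a Bernoulli indicator with mean `p d u · r d`, since the
other examination indicators sum out of the product weight. Linearity of expectation then gives
`∑ d, λ d r d (∑ u, p d u w u) / (∑ u, p d u v u)`; the IPS weights use `v` but the clicks follow
`w`, which is where the bias comes from.
-/

open Finset

variable {ι U R : Type*} [Fintype ι] [DecidableEq ι] [Fintype U] [CommRing R]

def bernoulliWeight (p : ι → R) (e : ι → Bool) : R :=
  ∏ i, if e i then p i else 1 - p i

theorem sum_bernoulliWeight_mul_indicator (p : ι → R) (i : ι) :
    ∑ e : ι → Bool, bernoulliWeight p e * (if e i then 1 else 0) = p i := by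
  -- With the indicator folded into the `i`-th factor the summand is still a product, so it factors.
  let g : ι → Bool → R := fun j b =>
    (if b then p j else 1 - p j) * if j = i then (if b then 1 else 0) else 1
  have hg : ∀ e : ι → Bool, ∏ j, g j (e j) = bernoulliWeight p e * (if e i then 1 else 0) := by
    intro e
    rw [prod_mul_distrib, prod_ite_eq' univ i, if_pos (mem_univ i), bernoulliWeight]
  have hsum : ∀ j, ∑ b, g j b = if j = i then p j else 1 := by
    intro j
    by_cases hj : j = i <;> simp [g, hj]
  simp_rw [← hg, ← Fintype.prod_sum, hsum, prod_ite_eq' univ i, if_pos (mem_univ i)]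

theorem sum_bernoulliWeight_mul_linear (p a : ι → R) :
    ∑ e : ι → Bool, bernoulliWeight p e * ∑ i, a i * (if e i then 1 else 0) = ∑ i, a i * p i := by
  simp_rw [mul_sum, mul_left_comm (bernoulliWeight p _)]
  rw [sum_comm]
  simp_rw [← mul_sum, sum_bernoulliWeight_mul_indicator]

theorem sum_mixture_bernoulliWeight_mul_linear (w : U → R) (p : ι → U → R) (a : ι → R) :
    ∑ u, ∑ e : ι → Bool, (w u * bernoulliWeight (p · u) e) * ∑ i, a i * (if e i then 1 else 0)
      = ∑ i, a i * ∑ u, p i u * w u := by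
  simp_rw [mul_assoc, ← mul_sum, sum_bernoulliWeight_mul_linear, mul_sum]
  rw [sum_comm]
  exact sum_congr rfl fun i _ => sum_congr rfl fun u _ => by ring

theorem ips_pbm_estimator_expectation_general
    (D U : Type) [Fintype D] [DecidableEq D] [Fintype U]
    (lam : D → ℝ) (r : D → ℝ)
    (p : D → U → ℝ)
    (w : U → ℝ)
    (v : U → ℝ) :
    (∑ u : U, ∑ e : D → Bool,
        (w u * ∏ d, (if e d then p d u else 1 - p d u)) *
          (∑ d, lam d * ((if e d then (1 : ℝ) else 0) * r d) /
            (∑ u', p d u' * v u')))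
      = ∑ d, lam d * r d * (∑ u, p d u * w u) / (∑ u, p d u * v u)
    ∧ ((∑ d, lam d * r d * (∑ u, p d u * w u) / (∑ u, p d u * v u))
          ≠ (∑ d, lam d * r d) →
        (∑ u : U, ∑ e : D → Bool,
          (w u * ∏ d, (if e d then p d u else 1 - p d u)) *
            (∑ d, lam d * ((if e d then (1 : ℝ) else 0) * r d) /
              (∑ u', p d u' * v u')))
          ≠ ∑ d, lam d * r d) := by
  set a : D → ℝ := fun d => lam d * r d / ∑ u', p d u' * v u'
  have hclick : ∀ (d : D) (b : Bool),
      lam d * ((if b then (1 : ℝ) else 0) * r d) / (∑ u', p d u' * v u')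
        = a d * (if b then 1 else 0) := fun d b => by ring
  have hexpect := sum_mixture_bernoulliWeight_mul_linear w p a
  simp only [bernoulliWeight, ← hclick] at hexpect
  have hmean : ∑ d, a d * ∑ u, p d u * w u
      = ∑ d, lam d * r d * (∑ u, p d u * w u) / (∑ u, p d u * v u) :=
    sum_congr rfl fun d _ => by ring
  rw [hexpect, hmean]
  exact ⟨rfl, id⟩

/-- Expected value of the user-oblivious IPS-PBM estimator under personalized
behavior. The user `u` is drawn from the query-conditional distribution `w`;
given `u`, the examination indicators `e d` are independent Bernoulli with
parameters `p d u`; clicks `c d = e d * r d` are reweighted by the marginal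
propensity `∑ u', p d u' * v u'` computed from the marginal user distribution
`v`. The expectation equals
`∑ d, lam d * r d * (∑ u, p d u * w u) / (∑ u, p d u * v u)`; consequently the
estimator is biased for the ideal loss `∑ d, lam d * r d` whenever this
weighted sum differs from the ideal loss. -/
theorem ips_pbm_estimator_expectation
    (D U : Type) [Fintype D] [DecidableEq D] [Fintype U]
    (lam : D → ℝ) (r : D → ℝ) (hr : ∀ d, r d = 0 ∨ r d = 1)
    (p : D → U → ℝ) (hp : ∀ d u, 0 ≤ p d u ∧ p d u ≤ 1)
    (w : U → ℝ) (hw0 : ∀ u, 0 ≤ w u) (hw1 : ∑ u, w u = 1)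
    (v : U → ℝ) (hv0 : ∀ u, 0 ≤ v u) (hv1 : ∑ u, v u = 1)
    (hpos : ∀ d, 0 < ∑ u, p d u * v u) :
    (∑ u : U, ∑ e : D → Bool,
        (w u * ∏ d, (if e d then p d u else 1 - p d u)) *
          (∑ d, lam d * ((if e d then (1 : ℝ) else 0) * r d) /
            (∑ u', p d u' * v u')))
      = ∑ d, lam d * r d * (∑ u, p d u * w u) / (∑ u, p d u * v u)
    ∧ ((∑ d, lam d * r d * (∑ u, p d u * w u) / (∑ u, p d u * v u))
          ≠ (∑ d, lam d * r d) →
        (∑ u : U, ∑ e : D → Bool,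
          (w u * ∏ d, (if e d then p d u else 1 - p d u)) *
            (∑ d, lam d * ((if e d then (1 : ℝ) else 0) * r d) /
              (∑ u', p d u' * v u')))
          ≠ ∑ d, lam d * r d) :=
  ips_pbm_estimator_expectation_general D U lam r p w v
end
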